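/- arXiv:1009.5562 — 6 statements merged into one kernel-verified Lean document; each statement's English description precedes it below -/
import Mathlib

section
/- For any unit-norm sequence F = {f_n}_{n=1}^N in C^M, the frame potential FP(F) = ∑_{n,n'} |⟨f_n, f_{n'}⟩|^2 satisfies FP(F) = N²/M + ‖FF* − (N/M)I‖_HS², where ‖·‖_HS is the Hilbert–Schmidt (Frobenius) norm. -/
noncomputable section
open scoped InnerProductSpace

/-- The `n`-th column of `F`, as a vector in `ℂ^M`. -/
def col {M N : ℕ} (F : Matrix (Fin M) (Fin N) ℂ) (n : Fin N) : EuclideanSpace ℂ (Fin M) :=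
  (WithLp.equiv 2 (Fin M → ℂ)).symm (fun m => F m n)

/-- Squared Hilbert–Schmidt (Frobenius) norm. -/
def hsq {M N : ℕ} (A : Matrix (Fin M) (Fin N) ℂ) : ℝ := ∑ i, ∑ j, ‖A i j‖ ^ 2

/-- The frame potential. -/
def FP {M N : ℕ} (F : Matrix (Fin M) (Fin N) ℂ) : ℝ :=
  ∑ n : Fin N, ∑ n' : Fin N, ‖⟪col F n, col F n'⟫_ℂ‖ ^ 2

/-!
Since `⟪f_n, f_n'⟫` is the `(n, n')` entry of the Gram matrix `F*F`, the frame potential is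
`‖F*F‖²_HS = Re tr (F*F F*F) = Re tr (FF* FF*) = ‖FF*‖²_HS`. Expanding
`‖G - c I‖²_HS = ‖G‖²_HS - 2 c Re tr G + c² M` for `G = FF*` and real `c = N / M`, with
`tr FF* = ∑ ‖f_n‖² = N`, gives `‖FF*‖²_HS - N² / M`.
-/

section
open Matrix hiding col
variable {M N : ℕ}

lemma inner_col_col (F : Matrix (Fin M) (Fin N) ℂ) (n n' : Fin N) :
    ⟪col F n, col F n'⟫_ℂ = (Fᴴ * F) n n' := by
  simp [col, mul_apply, PiLp.inner_apply, mul_comm]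

lemma FP_eq_hsq_conjTranspose_mul_self (F : Matrix (Fin M) (Fin N) ℂ) : FP F = hsq (Fᴴ * F) := by
  simp only [FP, hsq, inner_col_col]

lemma hsq_eq_re_trace (A : Matrix (Fin M) (Fin N) ℂ) : hsq A = (trace (A * Aᴴ)).re := by
  simp [hsq, trace, mul_apply, conjTranspose_apply, Complex.mul_conj, ← Complex.sq_norm,
    -Complex.ofReal_pow]

lemma hsq_conjTranspose_mul_self (A : Matrix (Fin M) (Fin N) ℂ) :
    hsq (Aᴴ * A) = hsq (A * Aᴴ) := by
  rw [hsq_eq_re_trace, hsq_eq_re_trace, conjTranspose_mul, conjTranspose_mul,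
    conjTranspose_conjTranspose, Matrix.mul_assoc, trace_mul_comm]
  simp only [Matrix.mul_assoc]

lemma trace_mul_conjTranspose_eq_sum_norm_col_sq (F : Matrix (Fin M) (Fin N) ℂ) :
    trace (F * Fᴴ) = ∑ n, ((‖col F n‖ ^ 2 : ℝ) : ℂ) := by
  rw [trace_mul_comm]
  refine Finset.sum_congr rfl fun n _ => ?_
  rw [diag_apply, ← inner_col_col, inner_self_eq_norm_sq_to_K]
  push_cast; rfl

lemma hsq_sub_smul_one (A : Matrix (Fin M) (Fin M) ℂ) (c : ℂ) :
    hsq (A - c • 1) = hsq A - 2 * (star c * trace A).re + ‖c‖ ^ 2 * M := by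
  simp only [hsq_eq_re_trace, conjTranspose_sub, conjTranspose_smul, conjTranspose_one,
    sub_mul, mul_sub, Matrix.smul_mul, Matrix.mul_smul, Matrix.mul_one, Matrix.one_mul, smul_smul,
    trace_sub, trace_smul, trace_one, trace_conjTranspose, smul_eq_mul, Fintype.card_fin]
  simp only [RCLike.star_def, Complex.sub_re, Complex.mul_re, Complex.mul_im,
    Complex.conj_re, Complex.conj_im, Complex.natCast_re, Complex.natCast_im,
    ← Complex.normSq_eq_norm_sq, Complex.normSq_apply]
  ring

end

theorem frame_potential_eq
    (M N : ℕ) (hM : 0 < M) (F : Matrix (Fin M) (Fin N) ℂ)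
    (hunit : ∀ n : Fin N, ‖col F n‖ = 1) :
    FP F = (N : ℝ) ^ 2 / M
      + hsq (F * F.conjTranspose - ((N : ℂ) / M) • (1 : Matrix (Fin M) (Fin M) ℂ)) := by
  have htrace : Matrix.trace (F * F.conjTranspose) = N := by
    simp [trace_mul_conjTranspose_eq_sum_norm_col_sq, hunit]
  rw [hsq_sub_smul_one, htrace, FP_eq_hsq_conjTranspose_mul_self, hsq_conjTranspose_mul_self]
  have hM' : (M : ℝ) ≠ 0 := by positivity
  simp only [← Complex.ofReal_natCast, ← Complex.ofReal_div, RCLike.star_def, Complex.conj_ofReal,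
    Complex.mul_re, Complex.ofReal_re, Complex.ofReal_im, Complex.norm_real, norm_div,
    RCLike.norm_natCast, mul_zero, sub_zero]
  field_simp
  ring
end
end

section
/- For any unit-norm sequence F in C^M with N vectors, FP(F) ≥ N²/M, with equality if and only if FF* = (N/M)I (i.e., F is a unit norm tight frame). -/
noncomputable section
open scoped InnerProductSpace

/-!
The Gram matrix `Fᴴ F` and the frame operator `F Fᴴ` have the same Frobenius norm, so
`FP F = ‖F Fᴴ‖²`, and unit columns give `tr (F Fᴴ) = N`. The scalar matrix `(tr G / M) • 1` is the
orthogonal projection of `G` onto the line of scalar matrices, so Pythagoras gives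
`‖G - (tr G / M) • 1‖² = ‖G‖² - |tr G|² / M`. For `G = F Fᴴ` the right-hand side is
`FP F - N² / M`, which is therefore nonnegative and vanishes exactly when `F Fᴴ = (N / M) • 1`.
-/

open scoped Matrix Matrix.Norms.Frobenius ComplexConjugate
open RCLike

namespace Matrix

variable {𝕜 m n : Type*} [RCLike 𝕜] [Fintype m] [Fintype n]

theorem frobenius_norm_sq (A : Matrix m n 𝕜) : ‖A‖ ^ 2 = ∑ i, ∑ j, ‖A i j‖ ^ 2 := by
  rw [frobenius_norm_def, ← Real.sqrt_eq_rpow, Real.sq_sqrt (by positivity)]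
  simp only [Real.rpow_two]

theorem trace_mul_conjTranspose_self (A : Matrix m n 𝕜) :
    (A * Aᴴ).trace = ((‖A‖ ^ 2 : ℝ) : 𝕜) := by
  simp [frobenius_norm_sq, trace, mul_apply, RCLike.mul_conj]

theorem frobenius_norm_conjTranspose_mul_self (A : Matrix m n 𝕜) : ‖Aᴴ * A‖ = ‖A * Aᴴ‖ := by
  have h : ((‖Aᴴ * A‖ ^ 2 : ℝ) : 𝕜) = ((‖A * Aᴴ‖ ^ 2 : ℝ) : 𝕜) := by
    simp only [← trace_mul_conjTranspose_self, conjTranspose_mul, conjTranspose_conjTranspose]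
    rw [Matrix.mul_assoc, trace_mul_comm]
    simp only [Matrix.mul_assoc]
  exact (sq_eq_sq₀ (norm_nonneg _) (norm_nonneg _)).1 (RCLike.ofReal_injective h)

variable [DecidableEq n]

omit [Fintype n] in
theorem norm_sub_smul_one_apply_sq (G : Matrix n n 𝕜) (c : 𝕜) (i j : n) :
    ‖(G - c • 1) i j‖ ^ 2 =
      ‖G i j‖ ^ 2 + if i = j then ‖c‖ ^ 2 - 2 * re (conj c * G i j) else 0 := by
  rcases eq_or_ne i j with rfl | hij
  · rw [sub_apply, smul_apply, one_apply_eq, smul_eq_mul, mul_one, norm_sub_rev,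
      norm_sub_sq (𝕜 := 𝕜), inner_apply', if_pos rfl]
    ring
  · simp [hij]

theorem frobenius_norm_sub_smul_one_sq (G : Matrix n n 𝕜) (c : 𝕜) :
    ‖G - c • 1‖ ^ 2 = ‖G‖ ^ 2 - 2 * re (conj c * G.trace) + Fintype.card n * ‖c‖ ^ 2 := by
  simp only [frobenius_norm_sq, norm_sub_smul_one_apply_sq, Finset.sum_add_distrib,
    Finset.sum_ite_eq, Finset.mem_univ, if_true, Finset.sum_sub_distrib,
    trace, diag, Finset.mul_sum, map_sum, Finset.sum_const, Finset.card_univ, nsmul_eq_mul]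
  ring

theorem frobenius_norm_sub_trace_div_smul_one_sq (G : Matrix n n 𝕜) :
    ‖G - (G.trace / Fintype.card n) • 1‖ ^ 2 = ‖G‖ ^ 2 - ‖G.trace‖ ^ 2 / Fintype.card n := by
  have hre : conj (G.trace / Fintype.card n) * G.trace =
      ((‖G.trace‖ ^ 2 / Fintype.card n : ℝ) : 𝕜) := by
    rw [map_div₀, map_natCast, div_mul_eq_mul_div, RCLike.conj_mul]
    push_cast
    rfl
  rw [frobenius_norm_sub_smul_one_sq, hre, ofReal_re, norm_div, RCLike.norm_natCast]
  rcases eq_or_ne (Fintype.card n : ℝ) 0 with h | h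
  · simp [h]
  · field_simp
    ring

end Matrix

theorem inner_col {M N : ℕ} (F : Matrix (Fin M) (Fin N) ℂ) (n n' : Fin N) :
    ⟪col F n, col F n'⟫_ℂ = (Fᴴ * F) n n' := by
  simp [col, PiLp.inner_apply, Matrix.mul_apply, mul_comm]

theorem FP_eq_frobenius_norm_sq {M N : ℕ} (F : Matrix (Fin M) (Fin N) ℂ) :
    FP F = ‖F * Fᴴ‖ ^ 2 := by
  rw [← Matrix.frobenius_norm_conjTranspose_mul_self, Matrix.frobenius_norm_sq, FP]
  simp only [inner_col]

theorem frobenius_norm_sq_eq_sum_norm_col_sq {M N : ℕ} (F : Matrix (Fin M) (Fin N) ℂ) :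
    ‖F‖ ^ 2 = ∑ n, ‖col F n‖ ^ 2 := by
  simp only [Matrix.frobenius_norm_sq, EuclideanSpace.norm_sq_eq, col]
  exact Finset.sum_comm

theorem trace_mul_conjTranspose_of_norm_col_eq_one {M N : ℕ} (F : Matrix (Fin M) (Fin N) ℂ)
    (hunit : ∀ n, ‖col F n‖ = 1) : (F * Fᴴ).trace = N := by
  simp [Matrix.trace_mul_conjTranspose_self, frobenius_norm_sq_eq_sum_norm_col_sq, hunit]

theorem frame_potential_ge_and_untf_iff_general
    (M N : ℕ) (F : Matrix (Fin M) (Fin N) ℂ)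
    (hunit : ∀ n : Fin N, ‖col F n‖ = 1) :
    (N : ℝ) ^ 2 / M ≤ FP F ∧
    (FP F = (N : ℝ) ^ 2 / M ↔
      F * F.conjTranspose = ((N : ℂ) / M) • (1 : Matrix (Fin M) (Fin M) ℂ)) := by
  have hdist := Matrix.frobenius_norm_sub_trace_div_smul_one_sq (F * Fᴴ)
  rw [trace_mul_conjTranspose_of_norm_col_eq_one F hunit, Fintype.card_fin, Complex.norm_natCast,
    ← FP_eq_frobenius_norm_sq] at hdist
  refine ⟨sub_nonneg.mp (hdist ▸ sq_nonneg _), ?_⟩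
  rw [← sub_eq_zero, ← hdist, sq_eq_zero_iff, norm_eq_zero, sub_eq_zero]

theorem frame_potential_ge_and_untf_iff
    (M N : ℕ) (hM : 0 < M) (F : Matrix (Fin M) (Fin N) ℂ)
    (hunit : ∀ n : Fin N, ‖col F n‖ = 1) :
    (N : ℝ) ^ 2 / M ≤ FP F ∧
    (FP F = (N : ℝ) ^ 2 / M ↔
      F * F.conjTranspose = ((N : ℂ) / M) • (1 : Matrix (Fin M) (Fin M) ℂ)) :=
  frame_potential_ge_and_untf_iff_general M N F hunit
end
end

section
/- Let F = {f_n}_{n=1}^N be unit-norm vectors in C^M and let P_n be the orthogonal projection onto the orthogonal complement of f_n. Then ∑_{n=1}^N ‖P_n FF* f_n‖² ≤ 4N·‖FF* − (N/M)I‖_HS². -/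
/-!
`P_n` is the orthogonal projection onto `f_nᗮ`, so it kills `f_n` and is `1`-Lipschitz. Hence
`P_n (FF* f_n) = P_n ((FF* - (N/M) I) f_n)` has norm at most `‖(FF* - (N/M) I) f_n‖`, which the
Frobenius (Hilbert–Schmidt) norm of `FF* - (N/M) I` bounds since `‖f_n‖ = 1`. Summing over `n`
gives the estimate with `N` in place of `4N`.
-/

noncomputable section
open scoped InnerProductSpace

/-- Frame operator applied to a vector. -/
def frameOp {M N : ℕ} (F : Matrix (Fin M) (Fin N) ℂ) (x : EuclideanSpace ℂ (Fin M)) :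
    EuclideanSpace ℂ (Fin M) :=
  (WithLp.equiv 2 (Fin M → ℂ)).symm ((F * F.conjTranspose).mulVec x)

open scoped Matrix

section Projection

variable {𝕜 E : Type*} [RCLike 𝕜] [NormedAddCommGroup E] [InnerProductSpace 𝕜 E] {f : E}

theorem sub_inner_smul_eq_starProjection_orthogonal (hf : ‖f‖ = 1) (x : E) :
    x - ⟪f, x⟫_𝕜 • f = (𝕜 ∙ f)ᗮ.starProjection x := by
  rw [Submodule.starProjection_orthogonal, sub_apply,
    Submodule.starProjection_unit_singleton 𝕜 hf, ContinuousLinearMap.id_apply]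

theorem norm_sub_inner_smul_le (hf : ‖f‖ = 1) (x : E) : ‖x - ⟪f, x⟫_𝕜 • f‖ ≤ ‖x‖ := by
  rw [sub_inner_smul_eq_starProjection_orthogonal hf]
  exact Submodule.norm_starProjection_apply_le _ x

theorem sub_smul_sub_inner_smul (hf : ‖f‖ = 1) (x : E) (c : 𝕜) :
    (x - c • f) - ⟪f, x - c • f⟫_𝕜 • f = x - ⟪f, x⟫_𝕜 • f := by
  rw [inner_sub_right, inner_smul_right, inner_self_eq_norm_sq_to_K, hf]
  module

end Projection

theorem hsq_nonneg {M N : ℕ} (A : Matrix (Fin M) (Fin N) ℂ) : 0 ≤ hsq A := by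
  unfold hsq
  positivity

theorem frameOp_sub_smul {M N : ℕ} (F : Matrix (Fin M) (Fin N) ℂ) (c : ℂ)
    (x : EuclideanSpace ℂ (Fin M)) :
    frameOp F x - c • x = WithLp.toLp 2 ((F * Fᴴ - c • 1) *ᵥ x.ofLp) := by
  ext i
  simp [frameOp, Matrix.sub_mulVec, Matrix.smul_mulVec]

section Frobenius

open Matrix

attribute [local instance] Matrix.frobeniusNormedAddCommGroup

theorem Matrix.frobenius_norm_sq_s7 {𝕜 m n : Type*} [RCLike 𝕜] [Fintype m] [Fintype n]
    (A : Matrix m n 𝕜) : ‖A‖ ^ 2 = ∑ i, ∑ j, ‖A i j‖ ^ 2 := by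
  rw [frobenius_norm_def, ← Real.rpow_natCast, ← Real.rpow_mul (by positivity)]
  norm_num

theorem Matrix.norm_toLp_mulVec_le_frobenius {𝕜 m n : Type*} [RCLike 𝕜] [Fintype m]
    [Fintype n] (A : Matrix m n 𝕜) (x : n → 𝕜) :
    ‖WithLp.toLp 2 (A *ᵥ x)‖ ≤ ‖A‖ * ‖WithLp.toLp 2 x‖ := by
  rw [← frobenius_norm_replicateCol (ι := Unit), ← frobenius_norm_replicateCol (ι := Unit),
    replicateCol_mulVec]
  exact frobenius_norm_mul _ _

theorem norm_sq_frameOp_sub_inner_smul_le {M N : ℕ} (F : Matrix (Fin M) (Fin N) ℂ) (c : ℂ)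
    {f : EuclideanSpace ℂ (Fin M)} (hf : ‖f‖ = 1) :
    ‖frameOp F f - ⟪f, frameOp F f⟫_ℂ • f‖ ^ 2 ≤ hsq (F * Fᴴ - c • 1) := by
  rw [← sub_smul_sub_inner_smul hf _ c, hsq, ← frobenius_norm_sq_s7]
  gcongr
  calc _ ≤ ‖frameOp F f - c • f‖ := norm_sub_inner_smul_le hf _
    _ ≤ ‖F * Fᴴ - c • 1‖ * ‖f‖ := by
      rw [frameOp_sub_smul]
      exact norm_toLp_mulVec_le_frobenius _ _
    _ = ‖F * Fᴴ - c • 1‖ := by rw [hf, mul_one]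

end Frobenius

theorem gradient_norm_upper_bound
    (M N : ℕ) (F : Matrix (Fin M) (Fin N) ℂ)
    (hunit : ∀ n : Fin N, ‖col F n‖ = 1) :
    ∑ n : Fin N,
        ‖frameOp F (col F n) - ⟪col F n, frameOp F (col F n)⟫_ℂ • col F n‖ ^ 2
      ≤ 4 * N * hsq (F * F.conjTranspose - ((N : ℂ) / M) • (1 : Matrix (Fin M) (Fin M) ℂ)) := by
  set A := F * F.conjTranspose - ((N : ℂ) / M) • (1 : Matrix (Fin M) (Fin M) ℂ)
  have hA : 0 ≤ hsq A := hsq_nonneg A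
  calc _ ≤ ∑ _n : Fin N, hsq A :=
        Finset.sum_le_sum fun n _ => norm_sq_frameOp_sub_inner_smul_le F _ (hunit n)
    _ = N * hsq A := by simp
    _ ≤ 4 * N * hsq A := by nlinarith [(Nat.cast_nonneg N : (0 : ℝ) ≤ N)]
end
end

section
/- For unit vectors f_i, f_j in C^M and any orthonormal basis {e_m}_{m=1}^M, one has |⟨f_i, f_j⟩|² ≤ M · ∑_{m=1}^M min{|⟨f_i, e_m⟩|², |⟨f_j, e_m⟩|²}. -/
/-!
Expanding in the basis, `⟪f₁, f₂⟫ = ∑ ⟪f₁, e m⟫ ⟪e m, f₂⟫`. Both coordinates of a unit vector have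
modulus at most one, so each term is bounded by the smaller of the two moduli; the
Cauchy–Schwarz inequality `(∑ c m)² ≤ M ∑ c m²` then turns the bound on `‖⟪f₁, f₂⟫‖` into the
claimed bound on its square.
-/

open scoped InnerProductSpace

lemma mul_le_min_of_le_one {α : Type*} [Semiring α] [LinearOrder α] [IsOrderedRing α] {a b : α}
    (ha₀ : 0 ≤ a) (hb₀ : 0 ≤ b) (ha : a ≤ 1) (hb : b ≤ 1) : a * b ≤ min a b :=
  le_min (mul_le_of_le_one_right ha₀ hb) (mul_le_of_le_one_left hb₀ ha)

lemma min_sq_of_nonneg {α : Type*} [Semiring α] [LinearOrder α] [IsOrderedRing α] {a b : α}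
    (ha : 0 ≤ a) (hb : 0 ≤ b) : min a b ^ 2 = min (a ^ 2) (b ^ 2) := by
  rcases le_total a b with hab | hba
  · rw [min_eq_left hab, min_eq_left (pow_le_pow_left₀ ha hab 2)]
  · rw [min_eq_right hba, min_eq_right (pow_le_pow_left₀ hb hba 2)]

namespace OrthonormalBasis

variable {ι 𝕜 E : Type*} [Fintype ι] [RCLike 𝕜] [NormedAddCommGroup E] [InnerProductSpace 𝕜 E]
  (b : OrthonormalBasis ι 𝕜 E) {x y : E}

lemma norm_inner_le_one (hx : ‖x‖ ≤ 1) (i : ι) : ‖⟪x, b i⟫_𝕜‖ ≤ 1 :=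
  (norm_inner_le_norm x (b i)).trans (by rw [b.norm_eq_one, mul_one]; exact hx)

lemma norm_inner_le_sum_min (hx : ‖x‖ ≤ 1) (hy : ‖y‖ ≤ 1) :
    ‖⟪x, y⟫_𝕜‖ ≤ ∑ i, min ‖⟪x, b i⟫_𝕜‖ ‖⟪y, b i⟫_𝕜‖ := by
  rw [← b.sum_inner_mul_inner x y]
  refine (norm_sum_le _ _).trans (Finset.sum_le_sum fun i _ => ?_)
  rw [norm_mul, norm_inner_symm (b i) y]
  exact mul_le_min_of_le_one (norm_nonneg _) (norm_nonneg _)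
    (b.norm_inner_le_one hx i) (b.norm_inner_le_one hy i)

lemma norm_inner_sq_le_card_mul_sum_min (hx : ‖x‖ ≤ 1) (hy : ‖y‖ ≤ 1) :
    ‖⟪x, y⟫_𝕜‖ ^ 2 ≤ Fintype.card ι * ∑ i, min (‖⟪x, b i⟫_𝕜‖ ^ 2) (‖⟪y, b i⟫_𝕜‖ ^ 2) :=
  calc ‖⟪x, y⟫_𝕜‖ ^ 2 ≤ (∑ i, min ‖⟪x, b i⟫_𝕜‖ ‖⟪y, b i⟫_𝕜‖) ^ 2 :=
        pow_le_pow_left₀ (norm_nonneg _) (b.norm_inner_le_sum_min hx hy) 2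
    _ ≤ Fintype.card ι * ∑ i, min ‖⟪x, b i⟫_𝕜‖ ‖⟪y, b i⟫_𝕜‖ ^ 2 :=
        sq_sum_le_card_mul_sum_sq
    _ = Fintype.card ι * ∑ i, min (‖⟪x, b i⟫_𝕜‖ ^ 2) (‖⟪y, b i⟫_𝕜‖ ^ 2) := by
        simp only [min_sq_of_nonneg (norm_nonneg _) (norm_nonneg _)]

end OrthonormalBasis

theorem inner_sq_le_sum_min
    (M : ℕ) (f₁ f₂ : EuclideanSpace ℂ (Fin M))
    (hf₁ : ‖f₁‖ = 1) (hf₂ : ‖f₂‖ = 1)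
    (e : OrthonormalBasis (Fin M) ℂ (EuclideanSpace ℂ (Fin M))) :
    ‖⟪f₁, f₂⟫_ℂ‖ ^ 2
      ≤ M * ∑ m : Fin M, min (‖⟪f₁, e m⟫_ℂ‖ ^ 2) (‖⟪f₂, e m⟫_ℂ‖ ^ 2) := by
  simpa using e.norm_inner_sq_le_card_mul_sum_min hf₁.le hf₂.le
end

section
/- Suppose M and N are relatively prime. Let F be a unit-norm sequence in C^M with N vectors satisfying ‖FF* − (N/M)I‖_HS² ≤ 2/M³. Then F is not (1/(M⁸N⁴))-orthogonally partitionable, i.e., for every nontrivial partition I ⊔ J of {1,...,N} there exist i ∈ I, j ∈ J with |⟨f_i, f_j⟩| ≥ 1/(M⁸N⁴). -/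
noncomputable section
open scoped InnerProductSpace
open Finset

/-!
Let `(b_k)` be an orthonormal eigenbasis of the partial frame operator `S = ∑_{i ∈ I} f_i f_iᴴ`,
so that its eigenvalues are `μ_k = ∑_{i ∈ I} |⟨f_i, b_k⟩|²`, and put
`β_k = ∑_{j ∉ I} |⟨f_j, b_k⟩|²`. The Hilbert–Schmidt bound makes the deviations
`d_k = μ_k + β_k - N/M` sum to zero with `∑ d_k² ≤ 2/M³`, so every partial sum of the `d_k` is
at most `3/(4M)` in absolute value. If all cross inner products are below `ε`, pairing
`S b_k = μ_k b_k` with the `f_j`, `j ∉ I`, gives `μ_k β_k ≤ N² ε²`: each `μ_k` is either tiny or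
carries almost all of `μ_k + β_k`. Summing, `|I| = ∑ μ_k` lies within `1/M` of `(N/M) k`, where
`k` counts the large `μ_k`; hence `M |I| = N k`, impossible for coprime `M, N` and `0 < |I| < N`.
When `N < M`, a unit vector orthogonal to every `f_n` alone violates the Hilbert–Schmidt bound.
-/

open scoped Matrix

section RealLemmas
variable {κ : Type*} [Fintype κ]

theorem sq_sum_mul_card_le_of_sum_eq_zero [DecidableEq κ] (d : κ → ℝ) (hd : ∑ i, d i = 0)
    (s : Finset κ) : (∑ i ∈ s, d i) ^ 2 * Fintype.card κ ≤ #s * #sᶜ * ∑ i, d i ^ 2 := by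
  have hcompl : ∑ i ∈ sᶜ, d i = -∑ i ∈ s, d i := by
    linarith [sum_add_sum_compl s d]
  have hs := sq_sum_le_card_mul_sum_sq (s := s) (f := d)
  have hsc := sq_sum_le_card_mul_sum_sq (s := sᶜ) (f := d)
  rw [hcompl, neg_sq] at hsc
  rw [← sum_add_sum_compl s (fun i => d i ^ 2), ← card_add_card_compl s]
  push_cast
  nlinarith [mul_le_mul_of_nonneg_left hs (Nat.cast_nonneg (α := ℝ) #sᶜ),
    mul_le_mul_of_nonneg_left hsc (Nat.cast_nonneg (α := ℝ) #s)]

theorem abs_card_mul_sum_le_of_sum_eq_zero [DecidableEq κ] (d : κ → ℝ) (hd : ∑ i, d i = 0)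
    (hsq : ∑ i, d i ^ 2 ≤ 2 / Fintype.card κ ^ 3) (s : Finset κ) :
    |Fintype.card κ * ∑ i ∈ s, d i| ≤ 3 / 4 := by
  set M : ℝ := (Fintype.card κ : ℝ)
  have hsplit : (#s : ℝ) + #sᶜ = M := by rw [← Nat.cast_add, card_add_card_compl]
  have hM : 0 ≤ M := Nat.cast_nonneg _
  have hsq0 : 0 ≤ ∑ i, d i ^ 2 := sum_nonneg fun i _ => sq_nonneg _
  have hcard : (#s : ℝ) * #sᶜ ≤ M ^ 2 / 4 := by
    nlinarith [sq_nonneg ((#s : ℝ) - #sᶜ)]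
  have hmain : (M * ∑ i ∈ s, d i) ^ 2 ≤ 1 / 2 := by
    rcases hM.eq_or_lt with h0 | hpos
    · rw [← h0]; norm_num
    have h1 := sq_sum_mul_card_le_of_sum_eq_zero d hd s
    have h2 : M ^ 3 * ∑ i, d i ^ 2 ≤ 2 := by
      rwa [le_div_iff₀ (by positivity), mul_comm] at hsq
    calc (M * ∑ i ∈ s, d i) ^ 2 = M * ((∑ i ∈ s, d i) ^ 2 * M) := by ring
      _ ≤ M * (M ^ 2 / 4 * ∑ i, d i ^ 2) :=
          mul_le_mul_of_nonneg_left (h1.trans (mul_le_mul_of_nonneg_right hcard hsq0)) hM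
      _ ≤ 1 / 2 := by nlinarith
  rw [abs_le]
  constructor <;> nlinarith [sq_nonneg (M * ∑ i ∈ s, d i + 3 / 4),
    sq_nonneg (M * ∑ i ∈ s, d i - 3 / 4)]

theorem exists_abs_sum_sub_sum_add_le (μ β : κ → ℝ) (η : ℝ) (hμ : ∀ i, 0 ≤ μ i)
    (hβ : ∀ i, 0 ≤ β i) (hsum : ∀ i, 1 / 4 ≤ μ i + β i) (hμβ : ∀ i, μ i * β i ≤ η) :
    ∃ K : Finset κ, |∑ i, μ i - ∑ i ∈ K, (μ i + β i)| ≤ 8 * η * Fintype.card κ := by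
  classical
  rcases isEmpty_or_nonempty κ with hκ | ⟨⟨i₀⟩⟩
  · exact ⟨∅, by simp⟩
  have hη : 0 ≤ 8 * η := by nlinarith [hμβ i₀, mul_nonneg (hμ i₀) (hβ i₀)]
  set K := univ.filter fun i => 1 / 8 ≤ μ i
  refine ⟨K, ?_⟩
  have hsplit : ∑ i, μ i - ∑ i ∈ K, (μ i + β i) = ∑ i ∈ Kᶜ, μ i - ∑ i ∈ K, β i := by
    rw [← sum_add_sum_compl K μ, sum_add_distrib]; ring
  have hβK : ∀ i ∈ K, β i ≤ 8 * η := fun i hi => by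
    have := (mem_filter.mp hi).2; nlinarith [hμβ i, hβ i]
  have hμK : ∀ i ∈ Kᶜ, μ i ≤ 8 * η := fun i hi => by
    have : μ i < 1 / 8 := by simpa [K] using hi
    nlinarith [hμβ i, hμ i, hsum i]
  have hcard (L : Finset κ) : ∑ _i ∈ L, 8 * η ≤ 8 * η * Fintype.card κ := by
    rw [sum_const, nsmul_eq_mul, mul_comm]
    exact mul_le_mul_of_nonneg_left (by exact_mod_cast card_le_univ L) hη
  rw [hsplit, abs_le]
  constructor
  · linarith [sum_le_sum hβK, hcard K, sum_nonneg fun i (_ : i ∈ Kᶜ) => hμ i]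
  · linarith [sum_le_sum hμK, hcard Kᶜ, sum_nonneg fun i (_ : i ∈ K) => hβ i]

theorem exists_abs_card_mul_sum_sub_le [DecidableEq κ] (μ β : κ → ℝ) (c η : ℝ)
    (hμ : ∀ i, 0 ≤ μ i) (hβ : ∀ i, 0 ≤ β i) (hc : 1 ≤ c)
    (hsum : ∑ i, (μ i + β i - c) = 0) (hsq : ∑ i, (μ i + β i - c) ^ 2 ≤ 2 / Fintype.card κ ^ 3)
    (hμβ : ∀ i, μ i * β i ≤ η) :
    ∃ k : ℕ, |Fintype.card κ * (∑ i, μ i - c * k)| ≤ 3 / 4 + 8 * Fintype.card κ ^ 2 * η := by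
  set M : ℝ := (Fintype.card κ : ℝ)
  have hd := abs_card_mul_sum_le_of_sum_eq_zero _ hsum hsq
  have hσ (i : κ) : 1 / 4 ≤ μ i + β i := by
    have hM : 1 ≤ M := Nat.one_le_cast.mpr (Fintype.card_pos_iff.mpr ⟨i⟩)
    have := hd {i}
    rw [sum_singleton, abs_mul, abs_of_pos (by positivity : 0 < M)] at this
    have := abs_le.mp ((le_mul_of_one_le_left (abs_nonneg _) hM).trans this)
    linarith
  obtain ⟨K, hK⟩ := exists_abs_sum_sub_sum_add_le μ β η hμ hβ hσ hμβ
  refine ⟨#K, ?_⟩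
  have hsplit : M * (∑ i, μ i - c * #K)
      = M * (∑ i, μ i - ∑ i ∈ K, (μ i + β i)) + M * ∑ i ∈ K, (μ i + β i - c) := by
    rw [sum_sub_distrib, sum_const, nsmul_eq_mul]; ring
  rw [hsplit]
  refine (abs_add_le _ _).trans (add_comm (3 / 4 : ℝ) _ ▸ add_le_add ?_ (hd K))
  rw [abs_mul, abs_of_nonneg (by positivity : 0 ≤ M)]
  calc M * |∑ i, μ i - ∑ i ∈ K, (μ i + β i)| ≤ M * (8 * η * M) := by gcongr
    _ = 8 * M ^ 2 * η := by ring

theorem sum_sq_mul_sum_sq_le_of_mul_le_mul_sum {ι : Type*} {s t : Finset ι} {u : ι → ℝ} {ε : ℝ}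
    (hu : ∀ n, 0 ≤ u n) (h : ∀ j ∈ t, (∑ i ∈ s, u i ^ 2) * u j ≤ ε * ∑ i ∈ s, u i) :
    (∑ i ∈ s, u i ^ 2) * ∑ j ∈ t, u j ^ 2 ≤ #s * #t * ε ^ 2 := by
  set μ := ∑ i ∈ s, u i ^ 2
  set β := ∑ j ∈ t, u j ^ 2
  set A := ∑ i ∈ s, u i
  set B := ∑ j ∈ t, u j
  have hA : A ^ 2 ≤ #s * μ := sq_sum_le_card_mul_sum_sq
  have hB : B ^ 2 ≤ #t * β := sq_sum_le_card_mul_sum_sq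
  have hμβ0 : 0 ≤ μ * β :=
    mul_nonneg (sum_nonneg fun i _ => sq_nonneg _) (sum_nonneg fun j _ => sq_nonneg _)
  have hμβ : μ * β ≤ ε * A * B := by
    calc μ * β = ∑ j ∈ t, μ * u j * u j := by
          rw [mul_sum]; exact sum_congr rfl fun j _ => by ring
      _ ≤ ∑ j ∈ t, ε * A * u j := sum_le_sum fun j hj => mul_le_mul_of_nonneg_right (h j hj) (hu j)
      _ = ε * A * B := (mul_sum t u (ε * A)).symm
  have hsq : (μ * β) ^ 2 ≤ #s * #t * ε ^ 2 * (μ * β) := by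
    calc (μ * β) ^ 2 ≤ (ε * A * B) ^ 2 := pow_le_pow_left₀ hμβ0 hμβ 2
      _ = ε ^ 2 * A ^ 2 * B ^ 2 := by ring
      _ ≤ ε ^ 2 * (#s * μ) * (#t * β) := by gcongr
      _ = #s * #t * ε ^ 2 * (μ * β) := by ring
  rcases hμβ0.eq_or_lt with h0 | hpos
  · rw [← h0]; positivity
  · exact le_of_mul_le_mul_right (by nlinarith) hpos

theorem two_div_pow_three_lt_div_sq {M N : ℝ} (hM : 1 ≤ M) (hN : 2 ≤ N) :
    2 / M ^ 3 < (N / M) ^ 2 := by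
  rw [div_pow, div_lt_div_iff₀ (by positivity) (by positivity)]
  nlinarith [mul_le_mul (by nlinarith : (4 : ℝ) ≤ N ^ 2) (by nlinarith : M ^ 2 ≤ M ^ 3)
    (by positivity) (by positivity)]

theorem mul_mul_one_div_pow_eight_mul_pow_four_le {M N : ℝ} (hM : 1 ≤ M) (hN : 2 ≤ N) :
    M * N * (1 / (M ^ 8 * N ^ 4)) ≤ 1 / 8 := by
  rw [mul_one_div, div_le_div_iff₀ (by positivity) (by positivity), one_mul]
  calc M * N * 8 = M * (8 * N) := by ring
    _ ≤ M ^ 8 * N ^ 4 := by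
      gcongr
      · nlinarith [one_le_pow₀ (n := 7) hM]
      · nlinarith [pow_le_pow_left₀ (by norm_num) hN 3]

end RealLemmas

theorem Nat.Coprime.one_le_abs_mul_sub_mul {M N a : ℕ} (hcop : M.Coprime N) (ha : 0 < a)
    (haN : a < N) (k : ℕ) : 1 ≤ |(M * a : ℝ) - N * k| := by
  have hne : M * a ≠ N * k := fun h => by
    have : N ∣ a := hcop.symm.dvd_of_dvd_mul_left ⟨k, h⟩
    exact absurd (Nat.le_of_dvd ha this) (by omega)
  have := Int.one_le_abs (sub_ne_zero.mpr (by exact_mod_cast hne : ((M * a : ℕ) : ℤ) ≠ N * k))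
  exact_mod_cast this

section FrameOperator
variable {𝕜 E ι : Type*} [RCLike 𝕜] [NormedAddCommGroup E] [InnerProductSpace 𝕜 E]

open InnerProductSpace

variable (𝕜) in
/-- `frameOperator 𝕜 f s = F_s F_sᴴ`, where `F_s` has the columns `f n`, `n ∈ s`. -/
def frameOperator (f : ι → E) (s : Finset ι) : E →L[𝕜] E := ∑ n ∈ s, rankOne 𝕜 (f n) (f n)

variable (f : ι → E) (s : Finset ι)

theorem frameOperator_apply (x : E) : frameOperator 𝕜 f s x = ∑ n ∈ s, ⟪f n, x⟫_𝕜 • f n := by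
  simp [frameOperator]

theorem isSymmetric_frameOperator : (frameOperator 𝕜 f s : E →ₗ[𝕜] E).IsSymmetric := by
  simpa [frameOperator] using LinearMap.isSymmetric_sum s fun n _ => isSymmetric_rankOne_self (f n)

theorem inner_frameOperator_self (x : E) :
    ⟪x, frameOperator 𝕜 f s x⟫_𝕜 = ((∑ n ∈ s, ‖⟪f n, x⟫_𝕜‖ ^ 2 : ℝ) : 𝕜) := by
  simp only [frameOperator_apply, inner_sum, inner_smul_right, RCLike.ofReal_sum, RCLike.ofReal_pow]
  refine sum_congr rfl fun n _ => ?_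
  rw [← inner_conj_symm x (f n), RCLike.mul_conj]

theorem eq_sum_sq_norm_inner_of_frameOperator_eq {x : E} (hx : ‖x‖ = 1) {μ : ℝ}
    (hμ : frameOperator 𝕜 f s x = (μ : 𝕜) • x) : μ = ∑ n ∈ s, ‖⟪f n, x⟫_𝕜‖ ^ 2 := by
  have h := inner_frameOperator_self (𝕜 := 𝕜) f s x
  rw [hμ, inner_smul_right, inner_self_eq_norm_sq_to_K, hx] at h
  simp only [map_one, one_pow, mul_one] at h
  exact_mod_cast h

theorem OrthonormalBasis.sum_sum_sq_norm_inner {κ : Type*} [Fintype κ]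
    (b : OrthonormalBasis κ 𝕜 E) : ∑ i, ∑ n ∈ s, ‖⟪f n, b i⟫_𝕜‖ ^ 2 = ∑ n ∈ s, ‖f n‖ ^ 2 := by
  rw [sum_comm]
  exact sum_congr rfl fun n _ => b.sum_sq_norm_inner_left (f n)

theorem mul_norm_inner_le_of_frameOperator_eq {x : E} {μ : ℝ} (hμ0 : 0 ≤ μ)
    (hμ : frameOperator 𝕜 f s x = (μ : 𝕜) • x) {j : ι} {ε : ℝ}
    (hε : ∀ i ∈ s, ‖⟪f i, f j⟫_𝕜‖ ≤ ε) :
    μ * ‖⟪f j, x⟫_𝕜‖ ≤ ε * ∑ i ∈ s, ‖⟪f i, x⟫_𝕜‖ := by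
  have h : (μ : 𝕜) * ⟪x, f j⟫_𝕜 = ∑ i ∈ s, ⟪x, f i⟫_𝕜 * ⟪f i, f j⟫_𝕜 := by
    simpa [frameOperator_apply, sum_inner, inner_smul_left] using
      (congrArg (fun y => ⟪y, f j⟫_𝕜) hμ).symm
  calc μ * ‖⟪f j, x⟫_𝕜‖ = ‖(μ : 𝕜) * ⟪x, f j⟫_𝕜‖ := by
        rw [norm_mul, RCLike.norm_ofReal, abs_of_nonneg hμ0, norm_inner_symm]
    _ ≤ ∑ i ∈ s, ‖⟪f i, x⟫_𝕜‖ * ε := by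
        rw [h]
        refine (norm_sum_le _ _).trans (sum_le_sum fun i hi => ?_)
        rw [norm_mul, norm_inner_symm]
        exact mul_le_mul_of_nonneg_left (hε i hi) (norm_nonneg _)
    _ = ε * ∑ i ∈ s, ‖⟪f i, x⟫_𝕜‖ := by rw [← sum_mul, mul_comm]

theorem sum_sq_norm_inner_mul_sum_sq_norm_inner_le {t : Finset ι} {ε : ℝ}
    (hε : ∀ i ∈ s, ∀ j ∈ t, ‖⟪f i, f j⟫_𝕜‖ ≤ ε) {x : E} (hx : ‖x‖ = 1) {μ : ℝ}
    (hμ : frameOperator 𝕜 f s x = (μ : 𝕜) • x) :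
    (∑ i ∈ s, ‖⟪f i, x⟫_𝕜‖ ^ 2) * ∑ j ∈ t, ‖⟪f j, x⟫_𝕜‖ ^ 2 ≤ #s * #t * ε ^ 2 := by
  have hμs := eq_sum_sq_norm_inner_of_frameOperator_eq f s hx hμ
  have hμ0 : 0 ≤ μ := hμs ▸ sum_nonneg fun i _ => sq_nonneg _
  refine sum_sq_mul_sum_sq_le_of_mul_le_mul_sum (fun _ => norm_nonneg _) fun j hj => ?_
  exact hμs ▸ mul_norm_inner_le_of_frameOperator_eq f s hμ0 hμ fun i hi => hε i hi j hj

theorem exists_orthonormalBasis_forall_inner_eq_zero [FiniteDimensional 𝕜 E] [Fintype ι]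
    {M : ℕ} (hM : Module.finrank 𝕜 E = M) (hcard : Fintype.card ι < M) :
    ∃ (b : OrthonormalBasis (Fin M) 𝕜 E) (i : Fin M), ∀ n, ⟪f n, b i⟫_𝕜 = 0 := by
  have hK : Submodule.span 𝕜 (Set.range f) ≠ ⊤ := fun h => by
    have := finrank_range_le_card (R := 𝕜) f
    rw [Set.finrank, h, finrank_top] at this
    omega
  obtain ⟨x, hxK, hx0⟩ := (Submodule.ne_bot_iff _).mp (mt Submodule.orthogonal_eq_bot_iff.mp hK)
  let i₀ : Fin M := ⟨0, by omega⟩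
  obtain ⟨b, hb⟩ := Orthonormal.exists_orthonormalBasis_extension_of_card_eq
    (by simpa using hM) (v := fun _ => (‖x‖⁻¹ : 𝕜) • x) (s := {i₀}) (by
      rw [orthonormal_iff_ite]
      rintro ⟨i, rfl⟩ ⟨j, rfl⟩
      simp [inner_self_eq_norm_sq_to_K, norm_smul_inv_norm hx0])
  refine ⟨b, i₀, fun n => ?_⟩
  rw [hb i₀ rfl, inner_smul_right, Submodule.inner_right_of_mem_orthogonal
    (Submodule.subset_span (Set.mem_range_self n)) hxK, mul_zero]

theorem sq_le_of_card_lt_finrank [FiniteDimensional 𝕜 E] [Fintype ι] {M : ℕ}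
    (hM : Module.finrank 𝕜 E = M) (hcard : Fintype.card ι < M) {c δ : ℝ}
    (hclose : ∀ b : OrthonormalBasis (Fin M) 𝕜 E, ∑ i, (∑ n, ‖⟪f n, b i⟫_𝕜‖ ^ 2 - c) ^ 2 ≤ δ) :
    c ^ 2 ≤ δ := by
  obtain ⟨b, i, hi⟩ := exists_orthonormalBasis_forall_inner_eq_zero f hM hcard
  refine le_trans ?_ ((single_le_sum (fun j _ => sq_nonneg _) (mem_univ i)).trans (hclose b))
  simp [hi]

theorem exists_abs_finrank_mul_card_sub_le [FiniteDimensional 𝕜 E] [Fintype ι] [DecidableEq ι]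
    {M : ℕ} (hM : Module.finrank 𝕜 E = M) (hM0 : 0 < M) (hMN : M ≤ Fintype.card ι)
    (hf : ∀ n, ‖f n‖ = 1)
    (hclose : ∀ b : OrthonormalBasis (Fin M) 𝕜 E,
      ∑ i, (∑ n, ‖⟪f n, b i⟫_𝕜‖ ^ 2 - (Fintype.card ι : ℝ) / M) ^ 2 ≤ 2 / M ^ 3)
    {ε : ℝ} (hε : ∀ i ∈ s, ∀ j ∉ s, ‖⟪f i, f j⟫_𝕜‖ ≤ ε) :
    ∃ k : ℕ, |(M * #s : ℝ) - Fintype.card ι * k| ≤ 3 / 4 + 8 * (M * Fintype.card ι * ε) ^ 2 := by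
  set N := Fintype.card ι
  have hS := isSymmetric_frameOperator (𝕜 := 𝕜) f s
  set b := hS.eigenvectorBasis hM
  set μ : Fin M → ℝ := fun i => ∑ n ∈ s, ‖⟪f n, b i⟫_𝕜‖ ^ 2
  set β : Fin M → ℝ := fun i => ∑ n ∈ sᶜ, ‖⟪f n, b i⟫_𝕜‖ ^ 2
  have hσ (i : Fin M) : μ i + β i = ∑ n, ‖⟪f n, b i⟫_𝕜‖ ^ 2 := sum_add_sum_compl s _
  have hc : 1 ≤ (N : ℝ) / M := (one_le_div (by positivity)).mpr (by exact_mod_cast hMN)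
  have hsum : ∑ i, (μ i + β i - N / M) = 0 := by
    simp only [hσ, sum_sub_distrib, b.sum_sum_sq_norm_inner, hf]
    simp only [N, one_pow, sum_const, card_univ, Fintype.card_fin, nsmul_eq_mul, mul_one]
    rw [mul_div_cancel₀ _ (by positivity), sub_self]
  have hμs : ∑ i, μ i = #s := by simpa [hf] using b.sum_sum_sq_norm_inner f s
  have hcard : (#s : ℝ) * #sᶜ ≤ N ^ 2 := by
    have h1 : (#s : ℝ) ≤ N := by exact_mod_cast card_le_univ s
    have h2 : (#sᶜ : ℝ) ≤ N := by exact_mod_cast card_le_univ sᶜ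
    nlinarith
  have hμβ (i : Fin M) : μ i * β i ≤ N ^ 2 * ε ^ 2 :=
    (sum_sq_norm_inner_mul_sum_sq_norm_inner_le f s
      (fun i hi j hj => hε i hi j (mem_compl.mp hj)) (b.orthonormal.1 i)
      (hS.apply_eigenvectorBasis hM i)).trans (by gcongr)
  obtain ⟨k, hk⟩ := exists_abs_card_mul_sum_sub_le μ β _ _
    (fun i => sum_nonneg fun _ _ => sq_nonneg _) (fun i => sum_nonneg fun _ _ => sq_nonneg _) hc
    hsum (by simpa only [hσ, Fintype.card_fin] using hclose b) hμβ
  refine ⟨k, ?_⟩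
  rw [Fintype.card_fin, hμs] at hk
  convert hk using 2
  · field_simp
  · ring

theorem exists_le_norm_inner_of_coprime [FiniteDimensional 𝕜 E] [Fintype ι] [DecidableEq ι]
    {M : ℕ} (hM : Module.finrank 𝕜 E = M) (hcop : M.Coprime (Fintype.card ι))
    (hf : ∀ n, ‖f n‖ = 1)
    (hclose : ∀ b : OrthonormalBasis (Fin M) 𝕜 E,
      ∑ i, (∑ n, ‖⟪f n, b i⟫_𝕜‖ ^ 2 - (Fintype.card ι : ℝ) / M) ^ 2 ≤ 2 / M ^ 3)
    (hs₀ : s.Nonempty) (hs : s ≠ univ) :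
    ∃ i ∈ s, ∃ j ∉ s, 1 / ((M : ℝ) ^ 8 * (Fintype.card ι : ℝ) ^ 4) ≤ ‖⟪f i, f j⟫_𝕜‖ := by
  by_contra! hcross
  set N := Fintype.card ι
  obtain ⟨i₀, hi₀⟩ := hs₀
  have hs0 : 0 < #s := card_pos.mpr ⟨i₀, hi₀⟩
  have hsN : #s < N := card_lt_card (ssubset_univ_iff.mpr hs)
  have hM0 : 0 < M := hM ▸ Module.finrank_pos_iff_exists_ne_zero.mpr
    ⟨f i₀, norm_ne_zero_iff.mp (by simp [hf])⟩
  have hMr : (1 : ℝ) ≤ M := by exact_mod_cast hM0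
  have hNr : (2 : ℝ) ≤ N := by exact_mod_cast (by omega : 2 ≤ N)
  rcases lt_or_ge N M with hNM | hMN
  · exact (two_div_pow_three_lt_div_sq hMr hNr).not_ge (sq_le_of_card_lt_finrank f hM hNM hclose)
  · obtain ⟨k, hk⟩ := exists_abs_finrank_mul_card_sub_le f s hM hM0 hMN hf hclose
      fun i hi j hj => (hcross i hi j hj).le
    refine (hk.trans_lt ?_).not_ge (hcop.one_le_abs_mul_sub_mul hs0 hsN k)
    nlinarith [pow_le_pow_left₀ (by positivity)
      (mul_mul_one_div_pow_eight_mul_pow_four_le hMr hNr) 2]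

end FrameOperator

section HilbertSchmidt
variable {M N : ℕ} {κ : Type*} [Fintype κ]

@[simp] theorem col_apply (F : Matrix (Fin M) (Fin N) ℂ) (n : Fin N) (m : Fin M) :
    col F n m = F m n := rfl

theorem toEuclideanLin_apply_eq_inner_col (T : Matrix (Fin M) (Fin N) ℂ)
    (x : EuclideanSpace ℂ (Fin N)) (m : Fin M) :
    Matrix.toEuclideanLin T x m = ⟪col Tᴴ m, x⟫_ℂ := by
  simp [Matrix.toLpLin_apply, Matrix.mulVec, dotProduct, PiLp.inner_apply, mul_comm]

theorem sum_sq_norm_toEuclideanLin (T : Matrix (Fin M) (Fin N) ℂ)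
    (b : OrthonormalBasis κ ℂ (EuclideanSpace ℂ (Fin N))) :
    ∑ i, ‖Matrix.toEuclideanLin T (b i)‖ ^ 2 = hsq T := by
  simp_rw [EuclideanSpace.norm_sq_eq, toEuclideanLin_apply_eq_inner_col]
  rw [sum_comm, hsq]
  refine sum_congr rfl fun m _ => ?_
  rw [b.sum_sq_norm_inner_left, EuclideanSpace.norm_sq_eq]
  simp

theorem sum_sq_norm_inner_toEuclideanLin_le_hsq (T : Matrix (Fin N) (Fin N) ℂ)
    (b : OrthonormalBasis κ ℂ (EuclideanSpace ℂ (Fin N))) :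
    ∑ i, ‖⟪b i, Matrix.toEuclideanLin T (b i)⟫_ℂ‖ ^ 2 ≤ hsq T :=
  sum_sq_norm_toEuclideanLin T b ▸ sum_le_sum fun i _ => by
    gcongr
    simpa [b.orthonormal.1 i] using norm_inner_le_norm (𝕜 := ℂ) (b i) _

theorem toEuclideanLin_mul_conjTranspose (F : Matrix (Fin M) (Fin N) ℂ) :
    Matrix.toEuclideanLin (F * Fᴴ) = (frameOperator ℂ (col F) univ : _ →ₗ[ℂ] _) := by
  ext x m
  simp only [Matrix.toLpLin_mul_same, LinearMap.coe_comp, Function.comp_apply,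
    Matrix.toLpLin_apply, Matrix.mulVec_mulVec, Matrix.mulVec, dotProduct, Matrix.mul_apply,
    Matrix.conjTranspose_apply, RCLike.star_def, sum_mul, ContinuousLinearMap.coe_coe,
    frameOperator_apply, PiLp.inner_apply, col_apply, RCLike.inner_apply, WithLp.ofLp_sum,
    WithLp.ofLp_smul, Finset.sum_apply, Pi.smul_apply, smul_eq_mul]
  rw [sum_comm]
  exact sum_congr rfl fun n _ => sum_congr rfl fun k _ => by ring

theorem sum_sq_sub_le_hsq_mul_conjTranspose_sub (F : Matrix (Fin M) (Fin N) ℂ) (c : ℝ)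
    (b : OrthonormalBasis κ ℂ (EuclideanSpace ℂ (Fin M))) :
    ∑ i, (∑ n, ‖⟪col F n, b i⟫_ℂ‖ ^ 2 - c) ^ 2 ≤ hsq (F * Fᴴ - (c : ℂ) • 1) := by
  refine le_trans (le_of_eq (sum_congr rfl fun i _ => ?_))
    (sum_sq_norm_inner_toEuclideanLin_le_hsq _ b)
  rw [map_sub, map_smul, Matrix.toLpLin_one, toEuclideanLin_mul_conjTranspose,
    LinearMap.sub_apply, inner_sub_right, ContinuousLinearMap.coe_coe, inner_frameOperator_self,
    LinearMap.smul_apply, LinearMap.id_apply, inner_smul_right, inner_self_eq_norm_sq_to_K,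
    b.orthonormal.1 i]
  simp only [RCLike.ofReal_one, one_pow, mul_one]
  rw [RCLike.ofReal_eq_complex_ofReal, ← Complex.ofReal_sub, Complex.norm_real, Real.norm_eq_abs,
    sq_abs]

end HilbertSchmidt

theorem not_epsOP_of_coprime_general
    (M N : ℕ) (hcop : Nat.Coprime M N)
    (F : Matrix (Fin M) (Fin N) ℂ)
    (hunit : ∀ n : Fin N, ‖col F n‖ = 1)
    (hclose : hsq (F * F.conjTranspose - ((N : ℂ) / M) • (1 : Matrix (Fin M) (Fin M) ℂ))
      ≤ 2 / (M : ℝ) ^ 3) :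
    ∀ I : Finset (Fin N), I ≠ ∅ → I ≠ univ →
      ∃ i ∈ I, ∃ j ∉ I, 1 / ((M : ℝ) ^ 8 * (N : ℝ) ^ 4) ≤ ‖⟪col F i, col F j⟫_ℂ‖ := by
  intro I hI hIu
  have hframe (b : OrthonormalBasis (Fin M) ℂ (EuclideanSpace ℂ (Fin M))) :
      ∑ i, (∑ n, ‖⟪col F n, b i⟫_ℂ‖ ^ 2 - (Fintype.card (Fin N) : ℝ) / M) ^ 2 ≤ 2 / M ^ 3 :=
    (sum_sq_sub_le_hsq_mul_conjTranspose_sub F _ b).trans (by push_cast; simpa using hclose)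
  simpa using exists_le_norm_inner_of_coprime (col F) I finrank_euclideanSpace_fin
    (by simpa using hcop) hunit hframe (nonempty_iff_ne_empty.mpr hI) hIu

theorem not_epsOP_of_coprime
    (M N : ℕ) (hM : 0 < M) (hcop : Nat.Coprime M N)
    (F : Matrix (Fin M) (Fin N) ℂ)
    (hunit : ∀ n : Fin N, ‖col F n‖ = 1)
    (hclose : hsq (F * F.conjTranspose - ((N : ℂ) / M) • (1 : Matrix (Fin M) (Fin M) ℂ))
      ≤ 2 / (M : ℝ) ^ 3) :
    ∀ I : Finset (Fin N), I ≠ ∅ → I ≠ univ →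
      ∃ i ∈ I, ∃ j ∉ I, 1 / ((M : ℝ) ^ 8 * (N : ℝ) ^ 4) ≤ ‖⟪col F i, col F j⟫_ℂ‖ :=
  not_epsOP_of_coprime_general M N hcop F hunit hclose
end
end

section
/- Let M, N, M_I, |I| be positive integers with M_I < M, |I| < N, and gcd(M, N) = 1. Then |I|²/M_I + (N−|I|)²/(M−M_I) = N²/M + (|I|M − M_I N)²/(M·M_I·(M−M_I)) ≥ N²/M + 4/M³. -/
theorem partition_frame_potential_bound
    (M N MI K : ℕ) (hMI : 0 < MI) (hMIM : MI < M) (hK : 0 < K) (hKN : K < N)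
    (hcop : Nat.Coprime M N) :
    (K : ℝ) ^ 2 / MI + ((N : ℝ) - K) ^ 2 / ((M : ℝ) - MI)
        = (N : ℝ) ^ 2 / M
          + ((K : ℝ) * M - (MI : ℝ) * N) ^ 2 / ((M : ℝ) * MI * ((M : ℝ) - MI)) ∧
    (N : ℝ) ^ 2 / M + 4 / (M : ℝ) ^ 3
        ≤ (K : ℝ) ^ 2 / MI + ((N : ℝ) - K) ^ 2 / ((M : ℝ) - MI) := by
  have hM : 0 < M := hMI.trans hMIM
  have hMr : (0 : ℝ) < M := by exact_mod_cast hM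
  have hMIr : (0 : ℝ) < MI := by exact_mod_cast hMI
  have hdiff : (0 : ℝ) < (M : ℝ) - MI := by
    have : (MI : ℝ) < M := by exact_mod_cast hMIM
    linarith
  have hid : (K : ℝ) ^ 2 / MI + ((N : ℝ) - K) ^ 2 / ((M : ℝ) - MI)
      = (N : ℝ) ^ 2 / M
        + ((K : ℝ) * M - (MI : ℝ) * N) ^ 2 / ((M : ℝ) * MI * ((M : ℝ) - MI)) := by
    field_simp
    ring
  refine ⟨hid, ?_⟩
  rw [hid]
  -- numerator is a nonzero integer
  have hne : (K : ℤ) * M - (MI : ℤ) * N ≠ 0 := by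
    intro h
    have h' : (K : ℤ) * M = (MI : ℤ) * N := by linarith
    have h'' : (K * M : ℕ) = MI * N := by exact_mod_cast h'
    have hdvd : M ∣ MI * N := ⟨K, by rw [← h'']; ring⟩
    have : M ∣ MI := (Nat.Coprime.dvd_of_dvd_mul_right hcop hdvd)
    have := Nat.le_of_dvd hMI this
    omega
  have h1 : (1 : ℝ) ≤ ((K : ℝ) * M - (MI : ℝ) * N) ^ 2 := by
    have : (1 : ℤ) ≤ ((K : ℤ) * M - (MI : ℤ) * N) ^ 2 := by
      have := Int.one_le_abs (by exact hne)
      nlinarith [abs_nonneg ((K : ℤ) * M - (MI : ℤ) * N), sq_abs ((K : ℤ) * M - (MI : ℤ) * N)]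
    calc (1 : ℝ) ≤ (((K : ℤ) * M - (MI : ℤ) * N : ℤ) : ℝ) ^ 2 := by exact_mod_cast this
      _ = ((K : ℝ) * M - (MI : ℝ) * N) ^ 2 := by push_cast; ring
  -- denominator bound: M * MI * (M - MI) ≤ M^3 / 4
  have hden : (M : ℝ) * MI * ((M : ℝ) - MI) ≤ (M : ℝ) ^ 3 / 4 := by
    nlinarith [sq_nonneg ((M : ℝ) - 2 * MI), hMr.le]
  have hdenpos : (0 : ℝ) < (M : ℝ) * MI * ((M : ℝ) - MI) := by positivity
  have key : 4 / (M : ℝ) ^ 3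
      ≤ ((K : ℝ) * M - (MI : ℝ) * N) ^ 2 / ((M : ℝ) * MI * ((M : ℝ) - MI)) := by
    have h2 : 4 / (M : ℝ) ^ 3 ≤ 1 / ((M : ℝ) * MI * ((M : ℝ) - MI)) := by
      rw [div_le_div_iff₀ (by positivity) hdenpos]
      linarith
    calc 4 / (M : ℝ) ^ 3 ≤ 1 / ((M : ℝ) * MI * ((M : ℝ) - MI)) := h2
      _ ≤ ((K : ℝ) * M - (MI : ℝ) * N) ^ 2 / ((M : ℝ) * MI * ((M : ℝ) - MI)) := by
          gcongr
  linarith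
end
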